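/- arXiv:1102.2835 — 4 statements merged into one kernel-verified Lean document; each statement's English description precedes it below -/
import Mathlib

section
/- For a closed (n+1)-form σ on a manifold Z, the gauge transformation Φ_σ(Γ, Σ) = (Γ, Σ + i_Γ σ) on sections of ⋀^r(TZ) ⊕ ⋀^{n+1-r}(T*Z) is an automorphism of the multi-Courant bracket: Φ_σ([[(Γ,Σ),(Γ',Σ')]]) = [[Φ_σ(Γ,Σ), Φ_σ(Γ',Σ')]]. -/
noncomputable section

/-- An abstract model of the calculus of multivector fields and differential
forms on a smooth manifold `Z`:  `A` plays the role of the ring of smooth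
functions `C^∞(Z)`, `X` the space of (inhomogeneous) multivector fields, and
`F` the space of (inhomogeneous) differential forms.  The submodules `MV k`
and `Fm k` are the multivector fields and forms of pure degree `k`; `wedge`
is the exterior product of multivector fields, `sch` the Schouten–Nijenhuis
bracket, `iota` the contraction (interior product) of a multivector field
with a form (for decomposable `Γ = X₁ ∧ ⋯ ∧ X_k`,
`iota Γ α = i_{X_k} ⋯ i_{X_1} α`), and `d` the exterior derivative. -/
structure MultiCalc (A X F : Type) [CommRing A] [Algebra ℝ A]
    [AddCommGroup X] [AddCommGroup F] [Module ℝ X] [Module ℝ F]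
    [Module A X] [Module A F] [IsScalarTower ℝ A X] [IsScalarTower ℝ A F] where
  MV : ℕ → Submodule A X
  Fm : ℕ → Submodule A F
  wedge : X → X → X
  sch : X → X → X
  iota : X → F → F
  d : F → F
  wedge_add_left : ∀ a b c, wedge (a + b) c = wedge a c + wedge b c
  wedge_add_right : ∀ a b c, wedge a (b + c) = wedge a b + wedge a c
  wedge_smul_left : ∀ (f : A) a b, wedge (f • a) b = f • wedge a b
  wedge_smul_right : ∀ (f : A) a b, wedge a (f • b) = f • wedge a b
  iota_add_left : ∀ a b α, iota (a + b) α = iota a α + iota b α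
  iota_add_right : ∀ a α β, iota a (α + β) = iota a α + iota a β
  iota_smul_left : ∀ (f : A) a α, iota (f • a) α = f • iota a α
  iota_smul_right : ∀ (f : A) a α, iota a (f • α) = f • iota a α
  sch_add_left : ∀ a b c, sch (a + b) c = sch a c + sch b c
  sch_add_right : ∀ a b c, sch a (b + c) = sch a b + sch a c
  sch_smul_left : ∀ (c : ℝ) a b, sch (c • a) b = c • sch a b
  sch_smul_right : ∀ (c : ℝ) a b, sch a (c • b) = c • sch a b
  d_add : ∀ α β, d (α + β) = d α + d β
  d_smul : ∀ (c : ℝ) α, d (c • α) = c • d α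
  d_d : ∀ α, d (d α) = 0
  wedge_mem : ∀ {r s : ℕ} {a b}, a ∈ MV r → b ∈ MV s → wedge a b ∈ MV (r + s)
  sch_mem : ∀ {r s : ℕ} {a b}, a ∈ MV r → b ∈ MV s → sch a b ∈ MV (r + s - 1)
  iota_mem : ∀ {r k : ℕ} {a α}, a ∈ MV r → α ∈ Fm k → iota a α ∈ Fm (k - r)
  iota_zero_of_lt : ∀ {r k : ℕ} {a α}, a ∈ MV r → α ∈ Fm k → k < r → iota a α = 0
  d_mem : ∀ {k : ℕ} {α}, α ∈ Fm k → d α ∈ Fm (k + 1)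
  /-- `i_{Γ ∧ Γ'} = i_{Γ'} ∘ i_Γ` -/
  iota_wedge : ∀ {r s : ℕ} {a b}, a ∈ MV r → b ∈ MV s →
    ∀ α, iota (wedge a b) α = iota b (iota a α)
  /-- graded commutativity of contractions -/
  iota_comm : ∀ {r s : ℕ} {a b}, a ∈ MV r → b ∈ MV s →
    ∀ α, iota a (iota b α) = ((-1:ℝ)^(r*s)) • iota b (iota a α)
  /-- the Koszul identity `i_{[Γ,Γ']} α = (-1)^{(k-1)l} £_Γ i_{Γ'} α − i_{Γ'} £_Γ α`,
  written out using `£_Γ α = d i_Γ α − (-1)^k i_Γ dα`. -/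
  koszul : ∀ {k l : ℕ} {a b}, a ∈ MV k → b ∈ MV l → ∀ α,
    iota (sch a b) α =
      ((-1:ℝ)^((k-1)*l)) •
        (d (iota a (iota b α)) - ((-1:ℝ)^k) • iota a (d (iota b α)))
      - iota b (d (iota a α) - ((-1:ℝ)^k) • iota a (d α))
  /-- graded anticommutativity of the Schouten–Nijenhuis bracket -/
  sch_comm : ∀ {k l : ℕ} {a b}, a ∈ MV k → b ∈ MV l →
    sch a b = -(((-1:ℝ)^((k-1)*(l-1))) • sch b a)
  /-- graded Leibniz rule for the Schouten–Nijenhuis bracket -/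
  sch_leibniz : ∀ {k l m : ℕ} {a b c}, a ∈ MV k → b ∈ MV l → c ∈ MV m →
    sch a (wedge b c) = wedge (sch a b) c + ((-1:ℝ)^((k-1)*l)) • wedge b (sch a c)
  /-- graded Jacobi identity for the Schouten–Nijenhuis bracket -/
  sch_jacobi : ∀ {k l m : ℕ} {a b c}, a ∈ MV k → b ∈ MV l → c ∈ MV m →
    ((-1:ℝ)^((k-1)*(m-1))) • sch a (sch b c)
      + ((-1:ℝ)^((l-1)*(k-1))) • sch b (sch c a)
      + ((-1:ℝ)^((m-1)*(l-1))) • sch c (sch a b) = 0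
  /-- contraction is a nondegenerate pairing of multivector fields with forms -/
  iota_nondeg : ∀ {k r : ℕ} {α}, α ∈ Fm k → 1 ≤ r → r ≤ k →
    (∀ a ∈ MV r, iota a α = 0) → α = 0

namespace MultiCalc

variable {A X F : Type} [CommRing A] [Algebra ℝ A]
  [AddCommGroup X] [AddCommGroup F] [Module ℝ X] [Module ℝ F]
  [Module A X] [Module A F] [IsScalarTower ℝ A X] [IsScalarTower ℝ A F]
variable (C : MultiCalc A X F)

/-- generalized Lie derivative along a multivector field of degree `k`:
`£_Γ α = d i_Γ α − (-1)^k i_Γ dα` -/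
def lie (k : ℕ) (a : X) (α : F) : F :=
  C.d (C.iota a α) - ((-1:ℝ)^k) • C.iota a (C.d α)

/-- graded symmetric pairing `⟨⟨·,·⟩⟩₊` on `L_r × L_s` -/
def pairPlus (r s : ℕ) (p q : X × F) : F :=
  (1/2 : ℝ) • (C.iota q.1 p.2 + ((-1:ℝ)^(r*s)) • C.iota p.1 q.2)

/-- graded antisymmetric pairing `⟨⟨·,·⟩⟩₋` on `L_r × L_s` -/
def pairMinus (r s : ℕ) (p q : X × F) : F :=
  (1/2 : ℝ) • (C.iota q.1 p.2 - ((-1:ℝ)^(r*s)) • C.iota p.1 q.2)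

/-- the multi-Courant bracket on sections of `L_r × L_s` -/
def courant (r s : ℕ) (p q : X × F) : X × F :=
  (C.sch p.1 q.1,
    ((-1:ℝ)^((r-1)*s)) • C.lie r p.1 q.2 + ((-1:ℝ)^s) • C.lie s q.1 p.2
      - ((-1:ℝ)^s) • C.d (C.pairPlus r s p q))

/-- the graded wedge product of sections of `L_r × L_s` -/
def wedgeP (r s : ℕ) (p q : X × F) : X × F :=
  (C.wedge p.1 q.1, C.pairPlus r s p q)

/-- `L_r = ⋀^r(TZ) ×_Z ⋀^{n+1-r}(T^*Z)` -/
def Lset (n r : ℕ) : Set (X × F) := {p | p.1 ∈ C.MV r ∧ p.2 ∈ C.Fm (n + 1 - r)}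

/-- the `s`-orthogonal complement of `V ⊆ L_r` with respect to `⟨⟨·,·⟩⟩₋` -/
def orthC (n r : ℕ) (V : Set (X × F)) (s : ℕ) : Set (X × F) :=
  {q ∈ C.Lset n s | ∀ p ∈ V, C.pairMinus r s p q = 0}

/-- a multi-Dirac structure of degree `n`: subbundles `D r ⊆ L_r` that are
maximally isotropic, i.e. `(D r)^{⊥,s} = D s` whenever `r + s ≤ n + 1` -/
structure IsMultiDirac (n : ℕ) (D : ℕ → Set (X × F)) : Prop where
  subset : ∀ r, 1 ≤ r → r ≤ n → D r ⊆ C.Lset n r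
  orth : ∀ r s, 1 ≤ r → 1 ≤ s → r + s ≤ n + 1 → C.orthC n r (D r) s = D s

/-- integrability: sections of `D` are closed under the multi-Courant bracket -/
def Integrable (n : ℕ) (D : ℕ → Set (X × F)) : Prop :=
  ∀ r s, 1 ≤ r → 1 ≤ s → r + s ≤ n + 1 →
    ∀ p ∈ D r, ∀ q ∈ D s, C.courant r s p q ∈ D (r + s - 1)

/-- the integrability tensor `T_D = 2 ⟨⟨·, [[·,·]]⟩⟩₋` -/
def TD (r s t : ℕ) (p q w : X × F) : F :=
  (2:ℝ) • C.pairMinus r (s + t - 1) p (C.courant s t q w)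

/-- the Jacobiator of the multi-Courant bracket -/
def jacobiator (r s t : ℕ) (p q w : X × F) : X × F :=
  C.courant r (s + t - 1) p (C.courant s t q w)
    + ((-1:ℝ)^((t-1)*(r+s))) • C.courant t (r + s - 1) w (C.courant r s p q)
    + ((-1:ℝ)^((r-1)*(s+t))) • C.courant s (t + r - 1) q (C.courant t r w p)

/-- the gauge transformation `Φ_σ (Γ, Σ) = (Γ, Σ + i_Γ σ)` -/
def gauge (σ : F) (p : X × F) : X × F := (p.1, p.2 + C.iota p.1 σ)

/-- the graph `{(Γ, i_Γ Ω)}` of a differential form `Ω` -/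
def graphD (Ω : F) (r : ℕ) : Set (X × F) := {p | p.1 ∈ C.MV r ∧ p.2 = C.iota p.1 Ω}

/-- the multi-Poisson bracket `{Σ, Σ'} = −(-1)^{|Σ|} i_{Γ_{Σ'}} dΣ`, written as a
function of the degree `k = |Σ|`, the form `Σ`, and a multivector field
`Γ_{Σ'}` associated with `Σ'` -/
def pb (k : ℕ) (α : F) (g : X) : F := -(((-1:ℝ)^k) • C.iota g (C.d α))

/-- an `(n-r)`-form `Σ` is admissible if `(Γ_Σ, dΣ) ∈ D_r` for some
`r`-multivector field `Γ_Σ` -/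
def Admissible (n : ℕ) (D : ℕ → Set (X × F)) (r : ℕ) (α : F) : Prop :=
  α ∈ C.Fm (n - r) ∧ ∃ g ∈ C.MV r, (g, C.d α) ∈ D r

/-- the form `Ω_D(v_1, …, v_n) := α_n(v_1, …, v_{n-1})` associated with `D_1`,
for sections `(v_i, α_i)` of `D_1` and `n = m + 1` -/
def OmD (m : ℕ) (p : Fin (m+1) → X × F) : F :=
  (List.ofFn fun i : Fin m => (p i.castSucc).1).foldl
    (fun β v => C.iota v β) (p (Fin.last m)).2

end MultiCalc

/-!
`Φ_σ` adds the graph `(Γ, i_Γ σ)` to the form parts, and the bracket is additive in the form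
parts. By the Koszul identity and `dσ = 0`, the bracket of two elements of the graph of `σ` is
again in that graph, i.e. has form part `i_{[Γ,Γ']} σ`; this is exactly the correction term
by which `Φ_σ` changes the bracket.
-/

lemma neg_one_pow_mul_self {R : Type*} [Monoid R] [HasDistribNeg R] (m : ℕ) :
    (-1 : R) ^ m * (-1) ^ m = 1 := by
  rw [← pow_add, ← two_mul, pow_mul, neg_one_sq, one_pow]

namespace MultiCalc

variable {A X F : Type} [CommRing A] [Algebra ℝ A]
  [AddCommGroup X] [AddCommGroup F] [Module ℝ X] [Module ℝ F]
  [Module A X] [Module A F] [IsScalarTower ℝ A X] [IsScalarTower ℝ A F]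
  (C : MultiCalc A X F)

lemma iota_real_smul (c : ℝ) (a : X) (α : F) : C.iota a (c • α) = c • C.iota a α := by
  rw [← algebraMap_smul A c α, C.iota_smul_right, algebraMap_smul]

lemma iota_zero_right (a : X) : C.iota a 0 = 0 := by
  simpa using C.iota_real_smul 0 a 0

lemma lie_add (k : ℕ) (a : X) (α β : F) :
    C.lie k a (α + β) = C.lie k a α + C.lie k a β := by
  simp only [lie, C.iota_add_right, C.d_add, smul_add]
  abel

lemma pairPlus_add (r s : ℕ) (a b : X) (α α' β β' : F) :
    C.pairPlus r s (a, α + α') (b, β + β') =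
      C.pairPlus r s (a, α) (b, β) + C.pairPlus r s (a, α') (b, β') := by
  simp only [pairPlus, C.iota_add_right, smul_add]
  abel

lemma courant_snd_add (r s : ℕ) (a b : X) (α α' β β' : F) :
    (C.courant r s (a, α + α') (b, β + β')).2 =
      (C.courant r s (a, α) (b, β)).2 + (C.courant r s (a, α') (b, β')).2 := by
  simp only [courant, C.lie_add, C.pairPlus_add, C.d_add, smul_add]
  abel

variable {C}

lemma pairPlus_graph {k l : ℕ} {a b : X} (ha : a ∈ C.MV k) (hb : b ∈ C.MV l) (σ : F) :
    C.pairPlus k l (a, C.iota a σ) (b, C.iota b σ) = C.iota b (C.iota a σ) := by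
  simp only [pairPlus, C.iota_comm ha hb, smul_smul, neg_one_pow_mul_self, one_smul]
  module

lemma iota_sch_of_d_eq_zero {k l : ℕ} {a b : X} (ha : a ∈ C.MV k) (hb : b ∈ C.MV l)
    {σ : F} (hdσ : C.d σ = 0) :
    C.iota (C.sch a b) σ =
      ((-1 : ℝ) ^ ((k - 1) * l)) • C.lie k a (C.iota b σ) - C.iota b (C.d (C.iota a σ)) := by
  rw [C.koszul ha hb, hdσ, C.iota_zero_right, smul_zero, sub_zero, lie]

lemma courant_graph_snd {k l : ℕ} {a b : X} (ha : a ∈ C.MV k) (hb : b ∈ C.MV l)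
    {σ : F} (hdσ : C.d σ = 0) :
    (C.courant k l (a, C.iota a σ) (b, C.iota b σ)).2 = C.iota (C.sch a b) σ := by
  rw [iota_sch_of_d_eq_zero ha hb hdσ, courant, pairPlus_graph ha hb]
  simp only [lie, smul_sub, smul_smul, neg_one_pow_mul_self, one_smul]
  abel

end MultiCalc

theorem gauge_courant_automorphism_general {A X F : Type} [CommRing A] [Algebra ℝ A]
    [AddCommGroup X] [AddCommGroup F] [Module ℝ X] [Module ℝ F]
    [Module A X] [Module A F] [IsScalarTower ℝ A X] [IsScalarTower ℝ A F]
    (C : MultiCalc A X F)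
    (n r s : ℕ)
    (σ : F) (hdσ : C.d σ = 0)
    (p q : X × F) (hp : p ∈ C.Lset n r) (hq : q ∈ C.Lset n s) :
    C.gauge σ (C.courant r s p q) = C.courant r s (C.gauge σ p) (C.gauge σ q) := by
  obtain ⟨a, α⟩ := p
  obtain ⟨b, β⟩ := q
  refine Prod.ext rfl ?_
  change (C.courant r s (a, α) (b, β)).2 + C.iota (C.sch a b) σ =
    (C.courant r s (a, α + C.iota a σ) (b, β + C.iota b σ)).2
  rw [C.courant_snd_add, MultiCalc.courant_graph_snd hp.1 hq.1 hdσ]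

/-- For a closed `(n+1)`-form `σ`, the gauge transformation
`Φ_σ(Γ,Σ) = (Γ, Σ + i_Γ σ)` is an automorphism of the multi-Courant bracket. -/
theorem gauge_courant_automorphism {A X F : Type} [CommRing A] [Algebra ℝ A]
    [AddCommGroup X] [AddCommGroup F] [Module ℝ X] [Module ℝ F]
    [Module A X] [Module A F] [IsScalarTower ℝ A X] [IsScalarTower ℝ A F]
    (C : MultiCalc A X F)
    (n r s : ℕ) (hr : 1 ≤ r) (hs : 1 ≤ s) (hrs : r + s ≤ n + 1)
    (σ : F) (hσ : σ ∈ C.Fm (n + 1)) (hdσ : C.d σ = 0)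
    (p q : X × F) (hp : p ∈ C.Lset n r) (hq : q ∈ C.Lset n s) :
    C.gauge σ (C.courant r s p q) = C.courant r s (C.gauge σ p) (C.gauge σ q) :=
  gauge_courant_automorphism_general C n r s σ hdσ p q hp hq
end
end

section
/- For any (n+1)-form σ on Z (not necessarily closed), the map Φ_σ(Γ,Σ) = (Γ, Σ + i_Γ σ) is an automorphism of the graded wedge product: Φ_σ((Γ,Σ) ∧ (Γ',Σ')) = Φ_σ(Γ,Σ) ∧ Φ_σ(Γ',Σ'). -/
noncomputable section

/-! `Φ_σ` leaves multivector parts alone and adds `i_{Γ ∧ Γ'} σ` to the form part of a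
wedge product, while on the right the pairing `⟨⟨·,·⟩⟩₊` of `Φ_σ p` and `Φ_σ q` picks up
`⟨⟨(Γ, i_Γ σ), (Γ', i_{Γ'} σ)⟩⟩₊`. The two agree because `i_{Γ ∧ Γ'} = i_{Γ'} ∘ i_Γ` and
contractions graded-commute, so both summands of that pairing equal `i_{Γ'} i_Γ σ`. -/

namespace MultiCalc

variable {A X F : Type} [CommRing A] [Algebra ℝ A]
  [AddCommGroup X] [AddCommGroup F] [Module ℝ X] [Module ℝ F]
  [Module A X] [Module A F] [IsScalarTower ℝ A X] [IsScalarTower ℝ A F]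
variable (C : MultiCalc A X F)

theorem pairPlus_gauge (r s : ℕ) (σ : F) (p q : X × F) :
    C.pairPlus r s (C.gauge σ p) (C.gauge σ q) =
      C.pairPlus r s p q + C.pairPlus r s (p.1, C.iota p.1 σ) (q.1, C.iota q.1 σ) := by
  simp only [pairPlus, gauge, C.iota_add_right, smul_add, ← add_assoc]
  abel

theorem pairPlus_iota_eq_iota_wedge {r s : ℕ} {a b : X} (ha : a ∈ C.MV r) (hb : b ∈ C.MV s)
    (σ : F) : C.pairPlus r s (a, C.iota a σ) (b, C.iota b σ) = C.iota (C.wedge a b) σ := by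
  have hsign : ((-1 : ℝ) ^ (r * s)) * (-1) ^ (r * s) = 1 :=
    pow_mul_pow_eq_one _ (by norm_num)
  have hsymm : ((-1 : ℝ) ^ (r * s)) • C.iota a (C.iota b σ) = C.iota b (C.iota a σ) := by
    rw [C.iota_comm ha hb, smul_smul, hsign, one_smul]
  rw [pairPlus, hsymm, C.iota_wedge ha hb, ← two_smul ℝ, smul_smul]
  norm_num

end MultiCalc

theorem gauge_wedge_automorphism_general {A X F : Type} [CommRing A] [Algebra ℝ A]
    [AddCommGroup X] [AddCommGroup F] [Module ℝ X] [Module ℝ F]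
    [Module A X] [Module A F] [IsScalarTower ℝ A X] [IsScalarTower ℝ A F]
    (C : MultiCalc A X F)
    (n r s : ℕ)
    (σ : F)
    (p q : X × F) (hp : p ∈ C.Lset n r) (hq : q ∈ C.Lset n s) :
    C.gauge σ (C.wedgeP r s p q) = C.wedgeP r s (C.gauge σ p) (C.gauge σ q) := by
  ext
  · rfl
  · change C.pairPlus r s p q + C.iota (C.wedge p.1 q.1) σ =
      C.pairPlus r s (C.gauge σ p) (C.gauge σ q)
    rw [C.pairPlus_gauge, C.pairPlus_iota_eq_iota_wedge hp.1 hq.1]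

/-- For any `(n+1)`-form `σ` (not necessarily closed), the gauge
transformation `Φ_σ(Γ,Σ) = (Γ, Σ + i_Γ σ)` is an automorphism of the graded
wedge product. -/
theorem gauge_wedge_automorphism {A X F : Type} [CommRing A] [Algebra ℝ A]
    [AddCommGroup X] [AddCommGroup F] [Module ℝ X] [Module ℝ F]
    [Module A X] [Module A F] [IsScalarTower ℝ A X] [IsScalarTower ℝ A F]
    (C : MultiCalc A X F)
    (n r s : ℕ) (hr : 1 ≤ r) (hs : 1 ≤ s) (hrs : r + s ≤ n)
    (σ : F) (hσ : σ ∈ C.Fm (n + 1))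
    (p q : X × F) (hp : p ∈ C.Lset n r) (hq : q ∈ C.Lset n s) :
    C.gauge σ (C.wedgeP r s p q) = C.wedgeP r s (C.gauge σ p) (C.gauge σ q) :=
  gauge_wedge_automorphism_general C n r s σ p q hp hq
end
end

section
/- If D = D_1 ⊕ ⋯ ⊕ D_n is a multi-Dirac structure of degree n on Z, then the wedge product of two sections of D is again a section of D: for (Γ,Σ) ∈ D_r and (Γ',Σ') ∈ D_s, (Γ,Σ) ∧ (Γ',Σ') = (Γ ∧ Γ', i_{Γ'}Σ) ∈ D_{r+s}. -/
noncomputable section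

/-! Isotropy `⟨⟨p, q⟩⟩₋ = 0` says `i_{Γ'}Σ = (-1)^{rs} i_Γ Σ'`, hence `⟨⟨p, q⟩⟩₊ = i_{Γ'}Σ`.
Since `D_{r+s} = (D_t)^{⊥,r+s}` for `t = n + 1 - (r + s)`, it remains to pair with
`w = (W, Ω) ∈ D_t`: on one side `i_{Γ∧Γ'}Ω = i_{Γ'} i_Γ Ω`, while graded commutativity and
isotropy of `p` against `w` turn `i_W i_{Γ'}Σ` into `(-1)^{ts+rt} i_{Γ'} i_Γ Ω`, a sign that
`(-1)^{t(r+s)}` cancels. -/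

namespace MultiCalc

variable {A X F : Type} [CommRing A] [Algebra ℝ A]
  [AddCommGroup X] [AddCommGroup F] [Module ℝ X] [Module ℝ F]
  [Module A X] [Module A F] [IsScalarTower ℝ A X] [IsScalarTower ℝ A F]
  (C : MultiCalc A X F)

lemma pairMinus_eq_zero_iff {r s : ℕ} {p q : X × F} :
    C.pairMinus r s p q = 0 ↔ C.iota q.1 p.2 = (-1:ℝ)^(r*s) • C.iota p.1 q.2 := by
  rw [pairMinus, smul_eq_zero, sub_eq_zero]
  norm_num

lemma pairPlus_eq_of_pairMinus_eq_zero {r s : ℕ} {p q : X × F}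
    (h : C.pairMinus r s p q = 0) : C.pairPlus r s p q = C.iota q.1 p.2 := by
  rw [pairPlus, ← (C.pairMinus_eq_zero_iff).1 h, ← two_smul ℝ, smul_smul]
  norm_num

lemma wedge_iota_mem_Lset {n r s : ℕ} {p : X × F} {b : X} (hp : p ∈ C.Lset n r)
    (hb : b ∈ C.MV s) : (C.wedge p.1 b, C.iota b p.2) ∈ C.Lset n (r + s) :=
  ⟨C.wedge_mem hp.1 hb, by simpa only [Nat.sub_sub] using C.iota_mem hb hp.2⟩

lemma pairMinus_wedge_iota_eq_zero {r s t : ℕ} {a b : X} {α : F} {w : X × F}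
    (ha : a ∈ C.MV r) (hb : b ∈ C.MV s) (hw : w.1 ∈ C.MV t)
    (hαw : C.iota w.1 α = (-1:ℝ)^(r*t) • C.iota a w.2) :
    C.pairMinus t (r + s) w (C.wedge a b, C.iota b α) = 0 := by
  have hcomm : C.iota w.1 (C.iota b α) =
      ((-1:ℝ)^(t*s) * (-1)^(r*t)) • C.iota b (C.iota a w.2) := by
    rw [C.iota_comm hw hb, hαw, C.iota_real_smul, smul_smul]
  have hsign : (-1:ℝ)^(t*(r+s)) * ((-1)^(t*s) * (-1)^(r*t)) = 1 := by
    rw [← pow_add, ← pow_add]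
    exact Even.neg_one_pow ⟨t*(r+s), by ring⟩
  rw [pairMinus_eq_zero_iff, C.iota_wedge ha hb, hcomm, smul_smul, hsign, one_smul]

namespace IsMultiDirac

variable {C} {n : ℕ} {D : ℕ → Set (X × F)}

lemma pairMinus_eq_zero (hD : C.IsMultiDirac n D) {r s : ℕ} (hr : 1 ≤ r) (hs : 1 ≤ s)
    (hrs : r + s ≤ n + 1) {p q : X × F} (hp : p ∈ D r) (hq : q ∈ D s) :
    C.pairMinus r s p q = 0 := by
  rw [← hD.orth r s hr hs hrs] at hq
  exact hq.2 p hp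

lemma mem_of_forall_pairMinus_eq_zero (hD : C.IsMultiDirac n D) {k : ℕ} (hk : 1 ≤ k)
    (hkn : k ≤ n) {x : X × F} (hx : x ∈ C.Lset n k)
    (hiso : ∀ w ∈ D (n + 1 - k), C.pairMinus (n + 1 - k) k w x = 0) : x ∈ D k := by
  rw [← hD.orth (n + 1 - k) k (by omega) hk (by omega)]
  exact ⟨hx, hiso⟩

end IsMultiDirac

end MultiCalc

/-- The wedge product of two sections of a multi-Dirac structure is again a
section: for `(Γ,Σ) ∈ D_r` and `(Γ',Σ') ∈ D_s`,
`(Γ,Σ) ∧ (Γ',Σ') = (Γ ∧ Γ', i_{Γ'}Σ) ∈ D_{r+s}`. -/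
theorem wedge_mem_multiDirac {A X F : Type} [CommRing A] [Algebra ℝ A]
    [AddCommGroup X] [AddCommGroup F] [Module ℝ X] [Module ℝ F]
    [Module A X] [Module A F] [IsScalarTower ℝ A X] [IsScalarTower ℝ A F]
    (C : MultiCalc A X F)
    (n : ℕ) (D : ℕ → Set (X × F)) (hD : C.IsMultiDirac n D)
    (r s : ℕ) (hr : 1 ≤ r) (hs : 1 ≤ s) (hrs : r + s ≤ n)
    (p q : X × F) (hp : p ∈ D r) (hq : q ∈ D s) :
    C.wedgeP r s p q = (C.wedge p.1 q.1, C.iota q.1 p.2) ∧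
      C.wedgeP r s p q ∈ D (r + s) := by
  have hpL := hD.subset r hr (by omega) hp
  have hqL := hD.subset s hs (by omega) hq
  have hwedge : C.wedgeP r s p q = (C.wedge p.1 q.1, C.iota q.1 p.2) :=
    Prod.ext rfl <|
      C.pairPlus_eq_of_pairMinus_eq_zero (hD.pairMinus_eq_zero hr hs (by omega) hp hq)
  refine ⟨hwedge, hwedge ▸ hD.mem_of_forall_pairMinus_eq_zero (by omega) hrs
    (C.wedge_iota_mem_Lset hpL hqL.1) fun w hw => ?_⟩
  have hwL := hD.subset (n + 1 - (r + s)) (by omega) (by omega) hw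
  exact C.pairMinus_wedge_iota_eq_zero hpL.1 hqL.1 hwL.1 <|
    (C.pairMinus_eq_zero_iff).1 (hD.pairMinus_eq_zero hr (by omega) (by omega) hp hw)
end
end

section
/- Let D = D_1 ⊕ ⋯ ⊕ D_n be a multi-Dirac structure and define Ω_D on sections of D_1 by Ω_D(v_1,…,v_n) := α_n(v_1,…,v_{n-1}) for sections (v_1,α_1),…,(v_n,α_n) of D_1 ⊂ TZ ⊕ ⋀^n(T*Z). Then Ω_D is totally antisymmetric in its n arguments. -/
noncomputable section

/-!
Unfolded, `Ω_D(v_1, …, v_n) = i_{v_{n-1}} ⋯ i_{v_1} α_n`. Contractions by vector fields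
anticommute, so exchanging two adjacent vectors among `v_1, …, v_{n-1}` changes the sign.
Exchanging `v_{n-1}` with `v_n` moves the form slot from `α_n` to `α_{n-1}`: commuting
`i_{v_{n-1}}` past the other contractions and using the isotropy
`i_{v_n} α_{n-1} = -i_{v_{n-1}} α_n` of `D_1` again yields a sign change. Adjacent
transpositions generate the symmetric group, whence total antisymmetry.
-/

namespace Equiv.Perm

theorem comp_eq_sign_smul_of_swap_castSucc_succ {n : ℕ} {α M : Type*}
    [AddCommGroup M] {S : Set α} {f : (Fin (n + 1) → α) → M}
    (hf : ∀ (i : Fin n) (q : Fin (n + 1) → α), (∀ j, q j ∈ S) →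
      f (q ∘ swap i.castSucc i.succ) = -f q)
    (σ : Perm (Fin (n + 1))) {q : Fin (n + 1) → α} (hq : ∀ j, q j ∈ S) :
    f (q ∘ σ) = (sign σ : ℤ) • f q := by
  have hσ : σ ∈ Submonoid.closure (Set.range fun i : Fin n => swap i.castSucc i.succ) :=
    mclosure_swap_castSucc_succ n ▸ Submonoid.mem_top σ
  induction hσ using Submonoid.closure_induction generalizing q with
  | mem _ h =>
    obtain ⟨i, rfl⟩ := h
    rw [hf i q hq, sign_swap (Fin.castSucc_lt_succ (i := i)).ne]
    simp
  | one => simp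
  | mul σ τ _ _ hσ hτ =>
    rw [coe_mul, ← Function.comp_assoc, hτ (q := q ∘ σ) fun j => hq _, hσ hq, sign_mul,
      Units.val_mul, mul_smul, smul_comm]

end Equiv.Perm

namespace MultiCalc

variable {A X F : Type} [CommRing A] [Algebra ℝ A]
  [AddCommGroup X] [AddCommGroup F] [Module ℝ X] [Module ℝ F]
  [Module A X] [Module A F] [IsScalarTower ℝ A X] [IsScalarTower ℝ A F]
  (C : MultiCalc A X F)

def iotaList (l : List X) (β : F) : F := l.foldl (fun β v => C.iota v β) β

theorem iota_neg (a : X) (β : F) : C.iota a (-β) = -C.iota a β :=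
  map_neg (AddMonoidHom.mk' (C.iota a) (C.iota_add_right a)) β

theorem iotaList_neg (l : List X) (β : F) : C.iotaList l (-β) = -C.iotaList l β := by
  induction l generalizing β with
  | nil => rfl
  | cons v l ih => exact (congrArg (C.iotaList l) (C.iota_neg v β)).trans (ih _)

theorem iota_iota_of_mem_one {a b : X} (ha : a ∈ C.MV 1) (hb : b ∈ C.MV 1) (β : F) :
    C.iota a (C.iota b β) = -C.iota b (C.iota a β) := by
  rw [C.iota_comm ha hb]
  simp

theorem iota_iotaList {a : X} (ha : a ∈ C.MV 1) {l : List X} (hl : ∀ v ∈ l, v ∈ C.MV 1)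
    (β : F) :
    C.iota a (C.iotaList l β) = ((-1 : ℤ) ^ l.length) • C.iotaList l (C.iota a β) := by
  induction l generalizing β with
  | nil => simp [iotaList]
  | cons b l ih =>
    have hb := hl b List.mem_cons_self
    show C.iota a (C.iotaList l (C.iota b β)) = _ • C.iotaList l (C.iota b (C.iota a β))
    rw [ih (fun v hv => hl v (List.mem_cons_of_mem b hv)), C.iota_iota_of_mem_one ha hb,
      iotaList_neg, List.length_cons, pow_succ]
    simp

theorem iotaList_cons_cons {a b : X} (ha : a ∈ C.MV 1) (hb : b ∈ C.MV 1) (l : List X) (β : F) :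
    C.iotaList (a :: b :: l) β = -C.iotaList (b :: a :: l) β := by
  show C.iotaList l (C.iota b (C.iota a β)) = -C.iotaList l (C.iota a (C.iota b β))
  rw [C.iota_iota_of_mem_one hb ha, iotaList_neg]

variable {C} in
theorem IsMultiDirac.isotropic {n : ℕ} {D : ℕ → Set (X × F)} (hD : C.IsMultiDirac (n + 1) D)
    {p q : X × F} (hp : p ∈ D 1) (hq : q ∈ D 1) : C.iota q.1 p.2 + C.iota p.1 q.2 = 0 := by
  have hq' : q ∈ C.orthC (n + 1) 1 (D 1) 1 := by
    rwa [hD.orth 1 1 le_rfl le_rfl (by omega)]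
  simpa [pairMinus, ← smul_add] using hq'.2 p hp

variable {C} in
theorem IsMultiDirac.fst_mem_one {n : ℕ} {D : ℕ → Set (X × F)}
    (hD : C.IsMultiDirac (n + 1) D) {p : X × F} (hp : p ∈ D 1) : p.1 ∈ C.MV 1 :=
  (hD.subset 1 le_rfl (by omega) hp).1

theorem iota_iotaList_snd_swap {n : ℕ} {D : ℕ → Set (X × F)} (hD : C.IsMultiDirac (n + 1) D)
    {p q : X × F} (hp : p ∈ D 1) (hq : q ∈ D 1) {l : List X} (hl : ∀ v ∈ l, v ∈ C.MV 1) :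
    C.iota p.1 (C.iotaList l q.2) = -C.iota q.1 (C.iotaList l p.2) := by
  rw [C.iota_iotaList (hD.fst_mem_one hp) hl, C.iota_iotaList (hD.fst_mem_one hq) hl,
    eq_neg_of_add_eq_zero_right (hD.isotropic hp hq), iotaList_neg, smul_neg]

theorem iotaList_concat (l : List X) (a : X) (β : F) :
    C.iotaList (l.concat a) β = C.iota a (C.iotaList l β) := by
  simp [iotaList]

theorem iotaList_ofFn_comp_swap {n : ℕ} {v : Fin (n + 1) → X} (hv : ∀ i, v i ∈ C.MV 1)
    (i : Fin n) (β : F) :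
    C.iotaList (List.ofFn (v ∘ Equiv.swap i.castSucc i.succ)) β =
      -C.iotaList (List.ofFn v) β := by
  induction n generalizing β with
  | zero => exact i.elim0
  | succ n ih =>
    induction i using Fin.cases with
    | zero =>
      have htail (j : Fin n) : Equiv.swap (0 : Fin (n + 2)) 1 j.succ.succ = j.succ.succ :=
        Equiv.swap_apply_of_ne_of_ne (Fin.succ_ne_zero _) (Fin.succ_succ_ne_one j)
      simp only [List.ofFn_succ, Function.comp_apply, Fin.castSucc_zero, Fin.succ_zero_eq_one,
        Equiv.swap_apply_left, Equiv.swap_apply_right, htail]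
      exact C.iotaList_cons_cons (hv 1) (hv 0) _ β
    | succ i =>
      have hhead : Equiv.swap i.castSucc.succ i.succ.succ 0 = 0 :=
        Equiv.swap_apply_of_ne_of_ne (Fin.succ_ne_zero _).symm (Fin.succ_ne_zero _).symm
      have htail : (fun j => v (Equiv.swap i.castSucc.succ i.succ.succ j.succ)) =
          (v ∘ Fin.succ) ∘ Equiv.swap i.castSucc i.succ := by
        funext j
        rw [Function.comp_apply, (Fin.succ_injective _).swap_apply]
        rfl
      rw [← Fin.succ_castSucc, List.ofFn_succ (f := v ∘ _), List.ofFn_succ (f := v)]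
      simp only [Function.comp_apply, hhead]
      rw [htail]
      exact ih (fun j => hv j.succ) i _

theorem OmD_eq (m : ℕ) (p : Fin (m + 1) → X × F) :
    C.OmD m p = C.iotaList (List.ofFn fun i : Fin m => (p i.castSucc).1) (p (Fin.last m)).2 :=
  rfl

theorem OmD_comp_swap {m : ℕ} {D : ℕ → Set (X × F)} (hD : C.IsMultiDirac (m + 1) D)
    {q : Fin (m + 1) → X × F} (hq : ∀ j, q j ∈ D 1) (i : Fin m) :
    C.OmD m (q ∘ Equiv.swap i.castSucc i.succ) = -C.OmD m q := by
  have hMV (j) : (q j).1 ∈ C.MV 1 := hD.fst_mem_one (hq j)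
  cases m with
  | zero => exact i.elim0
  | succ k =>
    induction i using Fin.lastCases with
    | last =>
      have hinit (j : Fin k) :
          Equiv.swap (Fin.last k).castSucc (Fin.last (k + 1)) j.castSucc.castSucc =
            j.castSucc.castSucc :=
        Equiv.swap_apply_of_ne_of_ne (Fin.castSucc_lt_castSucc_iff.2 (Fin.castSucc_lt_last j)).ne
          (Fin.castSucc_lt_last _).ne
      rw [OmD_eq, OmD_eq, List.ofFn_succ', List.ofFn_succ', iotaList_concat, iotaList_concat]
      simp only [Function.comp_apply, Fin.succ_last, Equiv.swap_apply_left,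
        Equiv.swap_apply_right, hinit]
      exact C.iota_iotaList_snd_swap hD (hq _) (hq _) (by simp [hMV])
    | cast j =>
      have hlast : Equiv.swap j.castSucc.castSucc j.succ.castSucc (Fin.last (k + 1)) =
          Fin.last (k + 1) :=
        Equiv.swap_apply_of_ne_of_ne (Fin.castSucc_lt_last _).ne' (Fin.castSucc_lt_last _).ne'
      have hinit : (fun i : Fin (k + 1) =>
          (q (Equiv.swap j.castSucc.castSucc j.succ.castSucc i.castSucc)).1) =
            (fun i => (q i.castSucc).1) ∘ Equiv.swap j.castSucc j.succ := by
        funext i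
        rw [Function.comp_apply, (Fin.castSucc_injective _).swap_apply]
      rw [← Fin.castSucc_succ, OmD_eq, OmD_eq, Function.comp_apply, hlast]
      simp only [Function.comp_apply]
      rw [hinit]
      exact C.iotaList_ofFn_comp_swap (fun i => hMV _) j _

end MultiCalc

/-- The `n`-form `Ω_D(v_1,…,v_n) := α_n(v_1,…,v_{n-1})` built from sections
`(v_i, α_i)` of `D_1` is totally antisymmetric in its arguments
(here `n = m + 1`). -/
theorem OmD_antisymmetric {A X F : Type} [CommRing A] [Algebra ℝ A]
    [AddCommGroup X] [AddCommGroup F] [Module ℝ X] [Module ℝ F]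
    [Module A X] [Module A F] [IsScalarTower ℝ A X] [IsScalarTower ℝ A F]
    (C : MultiCalc A X F)
    (m : ℕ) (D : ℕ → Set (X × F)) (hD : C.IsMultiDirac (m + 1) D)
    (p : Fin (m + 1) → X × F) (hp : ∀ i, p i ∈ D 1)
    (σ : Equiv.Perm (Fin (m + 1))) :
    C.OmD m (p ∘ σ) = (Equiv.Perm.sign σ : ℤ) • C.OmD m p :=
  Equiv.Perm.comp_eq_sign_smul_of_swap_castSucc_succ
    (fun i _ hq => C.OmD_comp_swap hD hq i) σ hp
end
end
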